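/- For every complex number s with Re s > 1, one has ∫_1^∞ (x · g(x)) x^{-s-1} dx = 1/((s-1) ζ(s)). -/

import Mathlib

open MeasureTheory Real Filter Set

/-- `g(x) = ∑_{1 ≤ k ≤ x} μ(k)/k`. -/
noncomputable def gFn (x : ℝ) : ℝ :=
  ∑ k ∈ Finset.Icc 1 ⌊x⌋₊, (ArithmeticFunction.moebius k : ℝ) / k

/-!
Since `x · x^(-s-1) = x^(-s)`, the integral is `∫_1^∞ A(t) t^(-s) dt` with `A` the summatory
function of `μ(k)/k`. Abel summation (`LSeries_eq_mul_integral'`) identifies `s - 1` times this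
integral with the L-series of `μ(k)/k` at `s - 1`, which is the L-series of `μ` at `s`, i.e.
`1/ζ(s)`. Abel summation needs the partial sums of `|μ(k)/k|` to be `O(n^r)` for some
`r < Re s - 1`; they are `O(n^r)` for every `r > 0`, by `H_n ≤ 1 + log n`.
-/

open Asymptotics Finset

theorem isBigO_one_add_log_rpow {r : ℝ} (hr : 0 < r) :
    (fun x : ℝ ↦ 1 + Real.log x) =O[atTop] fun x ↦ x ^ r :=
  ((isLittleO_const_left.mpr <| .inr <|
      tendsto_norm_atTop_atTop.comp (tendsto_rpow_atTop hr)).isBigO).add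
    (isLittleO_log_rpow_atTop hr).isBigO

theorem sum_Icc_norm_div_natCast_isBigO {a : ℕ → ℂ} {C : ℝ} (ha : ∀ k, ‖a k‖ ≤ C)
    {r : ℝ} (hr : 0 < r) :
    (fun n : ℕ ↦ ∑ k ∈ Icc 1 n, ‖a k / k‖) =O[atTop] fun n ↦ (n : ℝ) ^ r := by
  have hle (n : ℕ) : ∑ k ∈ Icc 1 n, ‖a k / k‖ ≤ C * (1 + Real.log n) :=
    calc ∑ k ∈ Icc 1 n, ‖a k / k‖ ≤ ∑ k ∈ Icc 1 n, C * (k : ℝ)⁻¹ :=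
          sum_le_sum fun k _ ↦ by
            rw [norm_div, Complex.norm_natCast, div_eq_mul_inv]
            exact mul_le_mul_of_nonneg_right (ha k) (by positivity)
      _ = C * harmonic n := by rw [← mul_sum, harmonic_eq_sum_Icc]; push_cast; rfl
      _ ≤ C * (1 + Real.log n) :=
          mul_le_mul_of_nonneg_left (harmonic_le_one_add_log n) ((norm_nonneg _).trans (ha 0))
  refine (IsBigO.of_bound' (Eventually.of_forall fun n ↦ ?_)).trans
    (((isBigO_one_add_log_rpow hr).const_mul_left C).comp_tendsto tendsto_natCast_atTop_atTop)
  rw [Real.norm_of_nonneg (sum_nonneg fun _ _ ↦ norm_nonneg _)]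
  exact (hle n).trans (Real.le_norm_self _)

theorem LSeries_eq_mul_integral_sum_div_natCast {a : ℕ → ℂ} {C : ℝ} (ha : ∀ k, ‖a k‖ ≤ C)
    {s : ℂ} (hs : 1 < s.re) :
    LSeries a s = (s - 1) * ∫ t in Ioi (1 : ℝ), (∑ k ∈ Icc 1 ⌊t⌋₊, a k / k) * (t : ℂ) ^ (-s) := by
  have hr : 0 < (s.re - 1) / 2 := by linarith
  have hshift : LSeries (fun k ↦ a k / k) (s - 1) = LSeries a s := by
    refine tsum_congr fun n ↦ ?_
    rcases eq_or_ne n 0 with rfl | hn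
    · simp
    have hn' : (n : ℂ) ≠ 0 := Nat.cast_ne_zero.mpr hn
    rw [LSeries.term_of_ne_zero hn, LSeries.term_of_ne_zero hn, Complex.cpow_sub _ _ hn',
      Complex.cpow_one]
    field_simp
  rw [← hshift, LSeries_eq_mul_integral' _ hr.le (by rw [Complex.sub_re, Complex.one_re]; linarith)
    (sum_Icc_norm_div_natCast_isBigO ha hr), sub_add_cancel]

theorem LSeries_moebius_eq_inv_riemannZeta {s : ℂ} (hs : 1 < s.re) :
    LSeries (fun n ↦ (ArithmeticFunction.moebius n : ℂ)) s = (riemannZeta s)⁻¹ :=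
  eq_inv_of_mul_eq_one_right <|
    ArithmeticFunction.LSeries_zeta_eq_riemannZeta hs ▸
      ArithmeticFunction.LSeries_zeta_mul_Lseries_moebius hs

theorem ofReal_mul_gFn_mul_cpow {x : ℝ} (hx : 0 < x) (s : ℂ) :
    ((x * gFn x : ℝ) : ℂ) * (x : ℂ) ^ (-s - 1) =
      (∑ k ∈ Icc 1 ⌊x⌋₊, (ArithmeticFunction.moebius k : ℂ) / k) * (x : ℂ) ^ (-s) := by
  have hx' : (x : ℂ) ≠ 0 := Complex.ofReal_ne_zero.mpr hx.ne'
  rw [Complex.cpow_sub _ _ hx', Complex.cpow_one, gFn]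
  push_cast
  field_simp

/-- For `Re s > 1`, `∫_1^∞ (x g(x)) x^{-s-1} dx = 1/((s-1) ζ(s))`. -/
theorem mellin_g (s : ℂ) (hs : 1 < s.re) :
    ∫ x in Set.Ioi (1:ℝ), ((x * gFn x : ℝ) : ℂ) * (x : ℂ) ^ (-s - 1) =
      1 / ((s - 1) * riemannZeta s) := by
  have hs1 : s - 1 ≠ 0 := sub_ne_zero.mpr fun h ↦ by simp [h] at hs
  have hLSeries := LSeries_eq_mul_integral_sum_div_natCast
    (a := fun n ↦ (ArithmeticFunction.moebius n : ℂ)) (C := 1)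
    (fun k ↦ by rw [Complex.norm_intCast]; exact_mod_cast ArithmeticFunction.abs_moebius_le_one) hs
  rw [LSeries_moebius_eq_inv_riemannZeta hs] at hLSeries
  rw [setIntegral_congr_fun measurableSet_Ioi fun x hx ↦
      ofReal_mul_gFn_mul_cpow (zero_lt_one.trans hx) s,
    one_div, mul_inv, hLSeries, ← mul_assoc, inv_mul_cancel₀ hs1, one_mul]
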